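/- arXiv:math/0307358 — 3 statements merged into one kernel-verified Lean document; each statement's English description precedes it below -/
import Mathlib

section
/- Fix an integer n ≥ 1. Suppose (F_g)_{g≥0} is a sequence of formal power series in ℚ⟦t⟧ such that: the constant coefficient of F₀ equals 1; t·F₀′ = 12n·G·F₀; and F_g = t·G′·F_{g−1} for every g ≥ 1. Then F_g = (t·G′)^g · P_{12n} for every g ≥ 0; in particular F₀ = P_{12n}, i.e. F₀ is the infinite product ∏_{d≥1}(1 − t^d)^{−12n}. -/
open PowerSeries

/-!
Applying `t d/dt` to `log ∏ (1 - t^d)^{-m}` gives `m ∑ d t^d / (1 - t^d) = m G`, so `P_m` solves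
`t F' = m G F`. This equation has at most one solution with a given nonzero constant term, since
for two solutions `t (F / P)' = 0`, so `F / P` is constant. The identity for `P_m` is checked
modulo `t^{N+1}` for every `N`: there `P_m` agrees with the partial product over `d ≤ N`, and the
logarithmic derivative of that finite product is the truncated Lambert series, which agrees with
`G` modulo `t^{N+1}`.
-/

/-- `σ d` is the sum of the positive divisors of `d`. -/
def sigmaFun (d : ℕ) : ℕ := ∑ k ∈ Nat.divisors d, k

/-- The generating series `G = ∑_{d ≥ 1} σ(d) t^d` in `ℚ⟦t⟧`. -/
noncomputable def Gser : PowerSeries ℚ :=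
  PowerSeries.mk fun d => if d = 0 then 0 else (sigmaFun d : ℚ)

/-- The partial product `∏_{d=1}^{N} (1 - t^d)^{-m}` in `ℚ⟦t⟧`. -/
noncomputable def partialProd (m N : ℕ) : PowerSeries ℚ :=
  ∏ d ∈ Finset.Icc 1 N, ((1 - (PowerSeries.X : PowerSeries ℚ) ^ d)⁻¹) ^ m

/-- The infinite product `∏_{d ≥ 1} (1 - t^d)^{-m}`, defined coefficientwise via the
stabilizing coefficients of the partial products. -/
noncomputable def Pser (m : ℕ) : PowerSeries ℚ :=
  PowerSeries.mk fun k => PowerSeries.coeff k (partialProd m k)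

theorem Nat.filter_Icc_dvd_eq_divisors {j N : ℕ} (hj : 0 < j) (hjN : j ≤ N) :
    {d ∈ Finset.Icc 1 N | d ∣ j} = j.divisors := by
  ext d
  simp only [Finset.mem_filter, Finset.mem_Icc, Nat.mem_divisors]
  constructor
  · exact fun h => ⟨h.2, hj.ne'⟩
  · exact fun h => ⟨⟨Nat.pos_of_dvd_of_pos h.1 hj, (Nat.le_of_dvd hj h.1).trans hjN⟩, h.1⟩

theorem dvd_prod_sub_one {ι R : Type*} [CommRing R] {x : R} {s : Finset ι} {f : ι → R}
    (h : ∀ i ∈ s, x ∣ f i - 1) : x ∣ ∏ i ∈ s, f i - 1 := by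
  induction s using Finset.cons_induction with
  | empty => simp
  | cons i s hi ih =>
    rw [Finset.prod_cons, show f i * ∏ j ∈ s, f j - 1
      = f i * (∏ j ∈ s, f j - 1) + (f i - 1) by ring]
    exact dvd_add (dvd_mul_of_dvd_right (ih fun j hj => h j (Finset.mem_cons_of_mem hj)) _)
      (h i (Finset.mem_cons_self i s))

theorem Derivation.mul_map_prod_of_mul_map_eq {R A ι : Type*} [CommSemiring R]
    [CommSemiring A] [Algebra R A] (D : Derivation R A A) (a : A) (s : Finset ι) {f h : ι → A}
    (hf : ∀ i ∈ s, a * D (f i) = h i * f i) :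
    a * D (∏ i ∈ s, f i) = (∑ i ∈ s, h i) * ∏ i ∈ s, f i := by
  induction s using Finset.cons_induction with
  | empty => simp
  | cons i s hi ih =>
    rw [Finset.prod_cons, Finset.sum_cons, D.leibniz, smul_eq_mul, smul_eq_mul, mul_add,
      mul_left_comm a (f i), mul_left_comm a, ih fun j hj => hf j (Finset.mem_cons_of_mem hj),
      hf i (Finset.mem_cons_self i s)]
    ring

theorem Derivation.mul_map_pow_of_mul_map_eq {R A : Type*} [CommSemiring R] [CommSemiring A]
    [Algebra R A] (D : Derivation R A A) {a f h : A} (hf : a * D f = h * f) (m : ℕ) :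
    a * D (f ^ m) = (m * h) * f ^ m := by
  simpa using D.mul_map_prod_of_mul_map_eq a (Finset.range m) (f := fun _ => f) (fun _ _ => hf)

namespace PowerSeries

theorem coeff_X_mul_derivative {R : Type*} [CommSemiring R] (f : R⟦X⟧) (j : ℕ) :
    coeff j (X * d⁄dX R f) = j * coeff j f := by
  cases j with
  | zero => simp
  | succ j => rw [coeff_succ_X_mul, coeff_derivative, Nat.cast_succ, mul_comm]

theorem X_pow_dvd_X_mul_derivative {R : Type*} [CommSemiring R] {n : ℕ} {f : R⟦X⟧}
    (h : X ^ n ∣ f) : X ^ n ∣ X * d⁄dX R f := by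
  rw [X_pow_dvd_iff] at h ⊢
  intro j hj
  rw [coeff_X_mul_derivative, h j hj, mul_zero]

theorem eq_of_X_mul_derivative_eq {K : Type*} [Field K] [CharZero K] {h f g : K⟦X⟧}
    (hf : X * d⁄dX K f = h * f) (hg : X * d⁄dX K g = h * g) (hg₀ : constantCoeff g ≠ 0)
    (hfg : constantCoeff f = constantCoeff g) : f = g := by
  have hgg : g * g⁻¹ = 1 := PowerSeries.mul_inv_cancel g hg₀
  have hq : X * d⁄dX K (f * g⁻¹) = 0 := by
    rw [Derivation.leibniz, derivative_inv', smul_eq_mul, smul_eq_mul]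
    linear_combination (-f * g⁻¹ ^ 2) * hg + g⁻¹ * hf - h * f * g⁻¹ * hgg
  have hq' : d⁄dX K (f * g⁻¹) = d⁄dX K 1 := by
    rw [derivative_one]
    exact (mul_eq_zero.mp hq).resolve_left X_ne_zero
  have hq₀ : constantCoeff (f * g⁻¹) = constantCoeff 1 := by
    rw [map_mul, hfg, ← map_mul, hgg]
  calc f = f * g⁻¹ * g := by rw [mul_assoc, mul_comm g⁻¹, hgg, mul_one]
    _ = g := by rw [derivative.ext hq' hq₀, one_mul]

variable {K : Type*} [Field K] {d : ℕ}

theorem inv_one_sub_X_pow_eq_mk (hd : 0 < d) :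
    (1 - X ^ d : K⟦X⟧)⁻¹ = mk fun j => if d ∣ j then 1 else 0 := by
  rw [inv_eq_iff_mul_eq_one (by simp [hd.ne'])]
  ext j
  simp only [mul_sub, mul_one, map_sub, coeff_mul_X_pow', coeff_mk, coeff_one]
  rcases Nat.eq_zero_or_pos j with rfl | hj
  · simp [hd.not_ge]
  by_cases hdj : d ≤ j
  · rw [if_pos hdj, if_neg hj.ne']
    simp only [← Nat.dvd_sub_iff_left hdj dvd_rfl, sub_self]
  · have hdj' : ¬d ∣ j := fun h => hdj (Nat.le_of_dvd hj h)
    rw [if_neg hdj, if_neg hj.ne', if_neg hdj', sub_zero]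

theorem X_pow_mul_inv_one_sub_X_pow (hd : 0 < d) :
    X ^ d * (1 - X ^ d : K⟦X⟧)⁻¹ = (1 - X ^ d)⁻¹ - 1 := by
  linear_combination -PowerSeries.mul_inv_cancel (1 - X ^ d : K⟦X⟧) (by simp [hd.ne'])

theorem X_pow_dvd_inv_one_sub_X_pow_sub_one (hd : 0 < d) :
    X ^ d ∣ (1 - X ^ d : K⟦X⟧)⁻¹ - 1 :=
  ⟨_, (X_pow_mul_inv_one_sub_X_pow hd).symm⟩

theorem X_mul_derivative_inv_one_sub_X_pow (hd : 0 < d) :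
    X * d⁄dX K (1 - X ^ d)⁻¹ = ((d : K⟦X⟧) * ((1 - X ^ d)⁻¹ - 1)) * (1 - X ^ d)⁻¹ := by
  rw [derivative_inv', map_sub, derivative_one, derivative_pow, derivative_X,
    ← X_pow_mul_inv_one_sub_X_pow hd]
  obtain ⟨e, rfl⟩ := Nat.exists_eq_add_one_of_ne_zero hd.ne'
  simp only [add_tsub_cancel_right, Nat.cast_add, Nat.cast_one]
  ring

end PowerSeries

/-- `∑_{d ≤ N} d t^d / (1 - t^d)`, using `t^d / (1 - t^d) = (1 - t^d)⁻¹ - 1`. -/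
noncomputable def lambertSum (N : ℕ) : ℚ⟦X⟧ :=
  ∑ d ∈ Finset.Icc 1 N, (d : ℚ⟦X⟧) * ((1 - X ^ d)⁻¹ - 1)

theorem X_mul_derivative_partialProd (m N : ℕ) :
    X * d⁄dX ℚ (partialProd m N) = ((m : ℚ⟦X⟧) * lambertSum N) * partialProd m N := by
  rw [lambertSum, Finset.mul_sum]
  exact (d⁄dX ℚ).mul_map_prod_of_mul_map_eq X _ fun d hd => (d⁄dX ℚ).mul_map_pow_of_mul_map_eq
    (X_mul_derivative_inv_one_sub_X_pow (Finset.mem_Icc.1 hd).1) m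

theorem coeff_lambertSum {j N : ℕ} (hjN : j ≤ N) : coeff j (lambertSum N) = coeff j Gser := by
  have hterm : ∀ d ∈ Finset.Icc 1 N, coeff j ((d : ℚ⟦X⟧) * ((1 - X ^ d)⁻¹ - 1))
      = if d ∣ j ∧ j ≠ 0 then (d : ℚ) else 0 := fun d hd => by
    rw [← map_natCast C, coeff_C_mul, map_sub, inv_one_sub_X_pow_eq_mk (Finset.mem_Icc.1 hd).1,
      coeff_mk, coeff_one]
    split_ifs <;> simp_all
  rw [lambertSum, map_sum, Finset.sum_congr rfl hterm, ← Finset.sum_filter, Gser, coeff_mk]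
  rcases Nat.eq_zero_or_pos j with rfl | hj
  · simp
  · simp only [hj.ne', ne_eq, not_false_eq_true, and_true, if_false, sigmaFun, Nat.cast_sum,
      Nat.filter_Icc_dvd_eq_divisors hj hjN]

theorem X_pow_succ_dvd_Gser_sub_lambertSum (N : ℕ) : X ^ (N + 1) ∣ Gser - lambertSum N :=
  X_pow_dvd_iff.2 fun j hj => by
    rw [map_sub, coeff_lambertSum (Nat.le_of_lt_succ hj), sub_self]

theorem X_pow_succ_dvd_partialProd_sub (m : ℕ) {N M : ℕ} (h : N ≤ M) :
    X ^ (N + 1) ∣ partialProd m M - partialProd m N := by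
  have hsplit : partialProd m M
      = partialProd m N * ∏ d ∈ Finset.Ioc N M, ((1 - X ^ d : ℚ⟦X⟧)⁻¹) ^ m :=
    (Finset.prod_Ioc_consecutive _ N.zero_le h).symm
  rw [hsplit, ← mul_sub_one]
  refine dvd_mul_of_dvd_right (dvd_prod_sub_one fun d hd => ?_) _
  have hNd := (Finset.mem_Ioc.1 hd).1
  exact (pow_dvd_pow X hNd).trans <|
    (X_pow_dvd_inv_one_sub_X_pow_sub_one (N.zero_le.trans_lt hNd)).trans
      (sub_one_dvd_pow_sub_one _ m)

theorem X_pow_succ_dvd_Pser_sub_partialProd (m N : ℕ) :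
    X ^ (N + 1) ∣ Pser m - partialProd m N :=
  X_pow_dvd_iff.2 fun k hk => by
    have hstable := X_pow_dvd_iff.1
      (X_pow_succ_dvd_partialProd_sub m (Nat.le_of_lt_succ hk)) k k.lt_succ_self
    rw [map_sub, sub_eq_zero] at hstable ⊢
    rw [Pser, coeff_mk, hstable]

theorem constantCoeff_Pser (m : ℕ) : constantCoeff (Pser m) = 1 := by
  simp [← coeff_zero_eq_constantCoeff_apply, Pser, partialProd]

theorem X_mul_derivative_Pser (m : ℕ) : X * d⁄dX ℚ (Pser m) = ((m : ℚ⟦X⟧) * Gser) * Pser m := by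
  ext K
  rw [← sub_eq_zero, ← map_sub]
  refine X_pow_dvd_iff.1 ?_ K K.lt_succ_self
  have hP := X_pow_succ_dvd_Pser_sub_partialProd m K
  have hG := X_pow_succ_dvd_Gser_sub_lambertSum K
  have hsplit : X * d⁄dX ℚ (Pser m) - (m : ℚ⟦X⟧) * Gser * Pser m
      = X * d⁄dX ℚ (Pser m - partialProd m K)
        - (m : ℚ⟦X⟧) * (Gser - lambertSum K) * partialProd m K
        - (m : ℚ⟦X⟧) * Gser * (Pser m - partialProd m K) := by
    rw [map_sub, mul_sub, X_mul_derivative_partialProd]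
    ring
  rw [hsplit]
  exact dvd_sub (dvd_sub (X_pow_dvd_X_mul_derivative hP)
    (dvd_mul_of_dvd_left (dvd_mul_of_dvd_right hG _) _)) (dvd_mul_of_dvd_right hP _)

theorem Fg_eq_tGprime_pow_mul_P_general (n : ℕ) (F : ℕ → PowerSeries ℚ)
    (h0 : PowerSeries.constantCoeff (F 0) = 1)
    (hODE : (PowerSeries.X : PowerSeries ℚ) * PowerSeries.derivative ℚ (F 0)
      = (12 * n : PowerSeries ℚ) * Gser * F 0)
    (hrec : ∀ g : ℕ, 1 ≤ g →
      F g = (PowerSeries.X : PowerSeries ℚ) * PowerSeries.derivative ℚ Gser * F (g - 1)) :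
    (∀ g : ℕ, F g =
      ((PowerSeries.X : PowerSeries ℚ) * PowerSeries.derivative ℚ Gser) ^ g * Pser (12 * n))
    ∧ F 0 = Pser (12 * n) := by
  have hP : X * d⁄dX ℚ (Pser (12 * n)) = (12 * n : ℚ⟦X⟧) * Gser * Pser (12 * n) := by
    rw [X_mul_derivative_Pser, Nat.cast_mul, Nat.cast_ofNat]
  have hF0 : F 0 = Pser (12 * n) :=
    eq_of_X_mul_derivative_eq hODE hP (by simp [constantCoeff_Pser])
      (by rw [h0, constantCoeff_Pser])
  refine ⟨fun g => ?_, hF0⟩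
  induction g with
  | zero => rw [pow_zero, one_mul, hF0]
  | succ g ih =>
    rw [hrec (g + 1) g.succ_pos, Nat.add_sub_cancel, ih, pow_succ]
    ring

theorem Fg_eq_tGprime_pow_mul_P (n : ℕ) (hn : 1 ≤ n) (F : ℕ → PowerSeries ℚ)
    (h0 : PowerSeries.constantCoeff (F 0) = 1)
    (hODE : (PowerSeries.X : PowerSeries ℚ) * PowerSeries.derivative ℚ (F 0)
      = (12 * n : PowerSeries ℚ) * Gser * F 0)
    (hrec : ∀ g : ℕ, 1 ≤ g →
      F g = (PowerSeries.X : PowerSeries ℚ) * PowerSeries.derivative ℚ Gser * F (g - 1)) :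
    (∀ g : ℕ, F g =
      ((PowerSeries.X : PowerSeries ℚ) * PowerSeries.derivative ℚ Gser) ^ g * Pser (12 * n))
    ∧ F 0 = Pser (12 * n) :=
  Fg_eq_tGprime_pow_mul_P_general n F h0 hODE hrec
end

section
/- Let (V, ⟨·,·⟩) be a finite-dimensional real inner product space with an isometric complex structure J, let α be an alternating J-anti-invariant bilinear form on V, and let K be the unique linear endomorphism of V satisfying ⟨u, K v⟩ = α(u, v) for all u, v ∈ V. Then the composition J ∘ K is skew-adjoint, ⟨(id + J∘K)u, u⟩ = ‖u‖² for every u ∈ V, the endomorphism id + J∘K is invertible, and the endomorphism J_α := (id + J∘K)⁻¹ ∘ J ∘ (id + J∘K) satisfies J_α ∘ J_α = −id, i.e. J_α is again a complex structure on V. -/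
open scoped RealInnerProductSpace

theorem Jalpha_is_complex_structure (V : Type*) [NormedAddCommGroup V]
    [InnerProductSpace ℝ V] [FiniteDimensional ℝ V]
    (J : Module.End ℝ V) (hJ : ∀ v, J (J v) = -v)
    (hJiso : ∀ u v : V, ⟪J u, J v⟫ = ⟪u, v⟫)
    (α : V →ₗ[ℝ] V →ₗ[ℝ] ℝ) (hAlt : ∀ v, α v v = 0)
    (hAI : ∀ u v, α (J u) (J v) = -α u v)
    (K : Module.End ℝ V) (hK : ∀ u v : V, ⟪u, K v⟫ = α u v) :
    (∀ u v : V, ⟪(J * K) u, v⟫ = -⟪u, (J * K) v⟫) ∧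
    (∀ u : V, ⟪(1 + J * K : Module.End ℝ V) u, u⟫ = ‖u‖ ^ 2) ∧
    IsUnit (1 + J * K : Module.End ℝ V) ∧
    (Ring.inverse (1 + J * K) * J * (1 + J * K)) *
        (Ring.inverse (1 + J * K) * J * (1 + J * K)) = (-1 : Module.End ℝ V) := by
  have hJskew : ∀ u v : V, ⟪J u, v⟫ = -⟪u, J v⟫ := by
    intro u v
    have := hJiso u (J v)
    rw [hJ v] at this
    simp only [inner_neg_right] at this
    linarith
  have hanti : ∀ u v : V, α u v = -α v u := by
    intro u v
    have h := hAlt (u + v)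
    simp [map_add, hAlt] at h
    linarith
  have hKskew : ∀ u v : V, ⟪K u, v⟫ = -⟪u, K v⟫ := by
    intro u v
    rw [real_inner_comm, hK, hK, hanti v u]
  have hJK : ∀ u v : V, ⟪(J * K) u, v⟫ = -⟪u, (J * K) v⟫ := by
    intro u v
    have key : ⟪J (K u), v⟫ = -⟪u, J (K v)⟫ := by
      have h1 : ⟪J (K u), v⟫ = ⟪u, K (J v)⟫ := by
        rw [hJskew, hKskew]; ring_nf
      have h2 : ⟪u, K (J v)⟫ = -⟪u, J (K v)⟫ := by
        have h := hAI u (J v)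
        rw [← hK, ← hK, hJ v] at h
        simp only [map_neg, inner_neg_right] at h
        have h3 : ⟪J u, K v⟫ = ⟪u, K (J v)⟫ := by linarith
        rw [← h3, hJskew]
      rw [h1, h2]
    simpa [Module.End.mul_apply] using key
  have hnorm : ∀ u : V, ⟪(1 + J * K : Module.End ℝ V) u, u⟫ = ‖u‖ ^ 2 := by
    intro u
    have hz : ⟪(J * K) u, u⟫ = 0 := by
      have h := hJK u u
      have hc := real_inner_comm ((J * K) u) u
      linarith
    have he : ⟪(1 + J * K : Module.End ℝ V) u, u⟫ = ⟪u, u⟫ + ⟪(J * K) u, u⟫ := by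
      simp [LinearMap.add_apply, inner_add_left]
    rw [he, hz, real_inner_self_eq_norm_sq]
    ring
  have hunit : IsUnit (1 + J * K : Module.End ℝ V) := by
    rw [LinearMap.isUnit_iff_ker_eq_bot, LinearMap.ker_eq_bot']
    intro u hu
    have h := hnorm u
    rw [hu] at h
    simp at h
    have h0 : ‖u‖ ^ 2 = 0 := h.symm
    have h1 : ‖u‖ = 0 := by
      simpa [pow_eq_zero_iff] using h0
    exact norm_eq_zero.mp h1
  refine ⟨hJK, hnorm, hunit, ?_⟩
  have hA : (1 + J * K : Module.End ℝ V) * Ring.inverse (1 + J * K) = 1 :=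
    Ring.mul_inverse_cancel _ hunit
  have hA' : Ring.inverse (1 + J * K) * (1 + J * K : Module.End ℝ V) = 1 :=
    Ring.inverse_mul_cancel _ hunit
  have hJ2 : J * J = -1 := by
    ext v; simp [Module.End.mul_apply, hJ v]
  calc (Ring.inverse (1 + J * K) * J * (1 + J * K)) *
      (Ring.inverse (1 + J * K) * J * (1 + J * K))
      = Ring.inverse (1 + J * K) * J * ((1 + J * K) * Ring.inverse (1 + J * K)) * J * (1 + J * K) := by
        noncomm_ring
    _ = Ring.inverse (1 + J * K) * (J * J) * (1 + J * K) := by rw [hA]; noncomm_ring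
    _ = -(Ring.inverse (1 + J * K) * (1 + J * K)) := by rw [hJ2]; noncomm_ring
    _ = -1 := by rw [hA']
end

section
/- Let (V, ⟨·,·⟩) be a finite-dimensional real inner product space with an isometric complex structure J, and let α be an alternating J-anti-invariant bilinear form on V satisfying |α(u, v)| ≤ M·‖u‖·‖v‖ for all u, v ∈ V, for some constant M ≥ 0. Let (W, ⟨·,·⟩) be a two-dimensional real inner product space with an isometric complex structure j, let e₁ ∈ W be a unit vector, and set e₂ = j e₁. For an ℝ-linear map L : W → V define ∂̄L := ½(L + J ∘ L ∘ j). Then α(L e₁, L e₂) ≤ 2·M·‖L‖·‖∂̄L‖, where ‖·‖ denotes the operator norm of a linear map from W to V. -/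
open scoped RealInnerProductSpace

theorem alpha_pullback_bound (V W : Type*)
    [NormedAddCommGroup V] [InnerProductSpace ℝ V] [FiniteDimensional ℝ V]
    [NormedAddCommGroup W] [InnerProductSpace ℝ W]
    (hW : Module.finrank ℝ W = 2)
    (J : V →L[ℝ] V) (hJ : ∀ v, J (J v) = -v)
    (hJiso : ∀ u v : V, ⟪J u, J v⟫ = ⟪u, v⟫)
    (α : V →ₗ[ℝ] V →ₗ[ℝ] ℝ) (hAlt : ∀ v, α v v = 0)
    (hAI : ∀ u v, α (J u) (J v) = -α u v)
    (M : ℝ) (hM : 0 ≤ M) (hbound : ∀ u v : V, |α u v| ≤ M * ‖u‖ * ‖v‖)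
    (j : W →L[ℝ] W) (hj : ∀ w, j (j w) = -w)
    (hjiso : ∀ w w' : W, ⟪j w, j w'⟫ = ⟪w, w'⟫)
    (e₁ : W) (he₁ : ‖e₁‖ = 1)
    (L : W →L[ℝ] V) :
    α (L e₁) (L (j e₁)) ≤
      2 * M * ‖L‖ * ‖(1 / 2 : ℝ) • (L + J.comp (L.comp j))‖ := by
  set Q : W →L[ℝ] V := (1 / 2 : ℝ) • (L + J.comp (L.comp j)) with hQ
  set a : V := L e₁ with ha
  set b : V := L (j e₁) with hb
  -- antisymmetry
  have hanti : ∀ u v, α u v = - α v u := by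
    intro u v
    have h := hAlt (u + v)
    simp only [map_add, LinearMap.add_apply, hAlt] at h
    linarith
  -- α a (J a) = 0
  have hJa : α a (J a) = 0 := by
    have h1 := hAI a (J a)
    rw [hJ a] at h1
    have h2 : α (J a) (-a) = - α (J a) a := by simp
    rw [h2, hanti (J a) a] at h1
    linarith
  -- b = 2 • Q e₂ + J a   where e₂ = j e₁... here Q (j e₁) = ½(b + J (L (j (j e₁)))) = ½(b - J a)
  have hQe : Q (j e₁) = (1/2 : ℝ) • (b - J a) := by
    simp only [hQ, ContinuousLinearMap.smul_apply, ContinuousLinearMap.add_apply,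
      ContinuousLinearMap.comp_apply, hj e₁, map_neg, hb, ha]
    module
  have hbeq : b = (2 : ℝ) • Q (j e₁) + J a := by
    rw [hQe]; module
  have hmain : α a b = 2 * α a (Q (j e₁)) := by
    rw [hbeq]
    simp only [map_add, map_smul, smul_eq_mul, hJa]
    ring
  -- norms
  have hje : ‖j e₁‖ = 1 := by
    have : ‖j e₁‖ ^ 2 = ‖e₁‖ ^ 2 := by
      rw [← real_inner_self_eq_norm_sq, ← real_inner_self_eq_norm_sq, hjiso]
    nlinarith [norm_nonneg (j e₁)]
  have h1 : ‖a‖ ≤ ‖L‖ := by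
    have := L.le_opNorm e₁
    rwa [he₁, mul_one] at this
  have h2 : ‖Q (j e₁)‖ ≤ ‖Q‖ := by
    have := Q.le_opNorm (j e₁)
    rwa [hje, mul_one] at this
  have h3 : α a (Q (j e₁)) ≤ M * ‖L‖ * ‖Q‖ := by
    calc α a (Q (j e₁)) ≤ |α a (Q (j e₁))| := le_abs_self _
    _ ≤ M * ‖a‖ * ‖Q (j e₁)‖ := hbound _ _
    _ ≤ M * ‖L‖ * ‖Q‖ := by gcongr
  rw [hmain]
  linarith
end
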